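/- Let K be a field with an absolute value, A = K[X,Y,Z], and w a monomial order. For the family f_t = (X + (1+t)Y, XY + (1-t)Y² + Z²) with t ∈ K, the initial ideal LM(⟨f_t⟩) (with respect to grevlex X > Y > Z) for t ≠ 0 differs from LM(⟨f_0⟩). In particular, the map sending a tuple of homogeneous polynomials to the set of leading monomials of the ideal it generates is not locally constant at f_0 = (X+Y, XY+Y²+Z²). -/

import Mathlib

open MvPolynomial

/-- Total degree of an exponent vector. -/
def monDeg {N : ℕ} (a : Fin N →₀ ℕ) : ℕ := a.sum fun _ e => e

/-- Divisibility of monomials (on exponent vectors). -/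
def MonDvd {N : ℕ} (a b : Fin N →₀ ℕ) : Prop := ∃ c, b = a + c

/-- The graded reverse lexicographic order (`X 0 > X 1 > X 2`) on three variables:
`a < b` iff `a` has smaller total degree, or the degrees agree and at the rightmost
index where they differ `a` has the larger exponent. -/
def grevlexLt (a b : Fin 3 →₀ ℕ) : Prop :=
  monDeg a < monDeg b ∨
    (monDeg a = monDeg b ∧ ∃ i : Fin 3, b i < a i ∧ ∀ j : Fin 3, i < j → a j = b j)

def grevlexLe (a b : Fin 3 →₀ ℕ) : Prop := a = b ∨ grevlexLt a b

/-- `m` is the leading monomial of `f` with respect to the order `le`. -/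
def IsLMr {N : ℕ} {K : Type*} [Field K] (le : (Fin N →₀ ℕ) → (Fin N →₀ ℕ) → Prop)
    (f : MvPolynomial (Fin N) K) (m : Fin N →₀ ℕ) : Prop :=
  m ∈ f.support ∧ ∀ m' ∈ f.support, le m' m

/-- The set of leading monomials of nonzero elements of the ideal `I`. -/
def LMsetr {N : ℕ} {K : Type*} [Field K] (le : (Fin N →₀ ℕ) → (Fin N →₀ ℕ) → Prop)
    (I : Ideal (MvPolynomial (Fin N) K)) : Set (Fin N →₀ ℕ) :=
  {m | ∃ f ∈ I, f ≠ 0 ∧ IsLMr le f m}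

/-- `G` is a Gröbner basis of the ideal `I` with respect to the order `le`. -/
def IsGBr {N : ℕ} {K : Type*} [Field K] (le : (Fin N →₀ ℕ) → (Fin N →₀ ℕ) → Prop)
    (G : Set (MvPolynomial (Fin N) K)) (I : Ideal (MvPolynomial (Fin N) K)) : Prop :=
  G.Finite ∧ G ⊆ ↑I ∧ ∀ f ∈ I, f ≠ 0 → ∃ g ∈ G, ∃ mg mf,
    IsLMr le g mg ∧ IsLMr le f mf ∧ MonDvd mg mf

/-! In the perturbed ideal, `Y · f₁ - f₂ = 2t Y² - Z²`, whose grevlex leading monomial is `Y²`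
as soon as `2t ≠ 0`. In the unperturbed ideal no element has leading monomial `Yⁿ`: the
substitution `X ↦ -T, Y ↦ T, Z ↦ 0` kills both generators, yet for `f` with leading monomial `Yⁿ`
the coefficient of `Tⁿ` in the image is the coefficient of `Yⁿ` in `f`, because every other
monomial `XᵃYᵇ` with `a + b = n` is grevlex-larger than `Yⁿ` and so does not occur in `f`. -/

lemma monDeg_fin_three (a : Fin 3 →₀ ℕ) : monDeg a = a 0 + a 1 + a 2 := by
  rw [monDeg, Finsupp.sum_fintype _ _ fun _ => rfl, Fin.sum_univ_three]

lemma grevlexLt_single_of_lt {i j : Fin 3} (hij : i < j) {n : ℕ} (hn : 0 < n) :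
    grevlexLt (Finsupp.single j n) (Finsupp.single i n) := by
  refine Or.inr ⟨by simp only [monDeg, Finsupp.sum_single_index], j, ?_, fun k hjk => ?_⟩
  · simpa [Finsupp.single_eq_of_ne hij.ne'] using hn
  · simp [Finsupp.single_eq_of_ne (hij.trans hjk).ne', Finsupp.single_eq_of_ne hjk.ne']

lemma eq_single_one_of_grevlexLe {d : Fin 3 →₀ ℕ} {n : ℕ}
    (hd : grevlexLe d (Finsupp.single 1 n)) (h2 : d 2 = 0) (h01 : d 0 + d 1 = n) :
    d = Finsupp.single 1 n := by
  rcases hd with rfl | hdeg | ⟨-, i, hi, habove⟩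
  · rfl
  · simp only [monDeg_fin_three, Finsupp.single_eq_same, ne_eq, Fin.reduceEq, not_false_eq_true,
      Finsupp.single_eq_of_ne] at hdeg
    omega
  · fin_cases i
    · have h1 := habove 1 (by decide)
      simp only [Fin.zero_eta, Finsupp.single_eq_same, ne_eq, zero_ne_one, not_false_eq_true,
        Finsupp.single_eq_of_ne] at hi h1
      omega
    · simp only [Fin.mk_one, Finsupp.single_eq_same] at hi
      omega
    · simp [h2] at hi

lemma isLMr_monomial_sub_monomial {N : ℕ} {K : Type*} [Field K]
    {le : (Fin N →₀ ℕ) → (Fin N →₀ ℕ) → Prop} {m m' : Fin N →₀ ℕ} (hrefl : le m m)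
    (hle : le m' m) (hne : m' ≠ m) {a : K} (ha : a ≠ 0) (b : K) :
    IsLMr le (monomial m a - monomial m' b) m := by
  refine ⟨by simp [coeff_monomial, hne, ha], fun d hd => ?_⟩
  by_cases hdm : d = m
  · exact hdm ▸ hrefl
  by_cases hdm' : d = m'
  · exact hdm' ▸ hle
  simp [coeff_monomial, Ne.symm hdm, Ne.symm hdm'] at hd

lemma coeff_aeval_of_isLMr_single_one {K : Type*} [Field K] (a : K)
    {f : MvPolynomial (Fin 3) K} {n : ℕ} (hf : IsLMr grevlexLe f (Finsupp.single 1 n)) :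
    (aeval ![Polynomial.C a * Polynomial.X, Polynomial.X, 0] f).coeff n =
      f.coeff (Finsupp.single 1 n) := by
  rw [aeval_def, eval₂_eq', Polynomial.finsetSum_coeff, Finset.sum_eq_single_of_mem _ hf.1]
  · simp [Fin.prod_univ_three, Polynomial.algebraMap_eq]
  intro d hd hne
  have hterm : algebraMap K (Polynomial K) (f.coeff d) *
      ∏ i, ![Polynomial.C a * Polynomial.X, Polynomial.X, 0] i ^ d i =
      if d 2 = 0 then Polynomial.C (f.coeff d * a ^ d 0) * Polynomial.X ^ (d 0 + d 1) else 0 := by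
    split_ifs with h2
    · simp only [Fin.prod_univ_three, Matrix.cons_val_zero, Matrix.cons_val_one, Matrix.cons_val,
        h2, pow_zero, mul_one, mul_pow, pow_add, Polynomial.algebraMap_eq, map_mul, map_pow]
      ring
    · simp [Fin.prod_univ_three, zero_pow h2]
  rw [hterm]
  split_ifs with h2
  · rw [Polynomial.coeff_C_mul_X_pow,
      if_neg fun h01 => hne (eq_single_one_of_grevlexLe (hf.2 d hd) h2 h01.symm)]
  · rfl

lemma single_one_notMem_LMsetr_span {K : Type*} [Field K] (n : ℕ) :
    Finsupp.single 1 n ∉ LMsetr grevlexLe (Ideal.span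
      {X 0 + X 1, X 0 * X 1 + (X 1 : MvPolynomial (Fin 3) K) ^ 2 + X 2 ^ 2}) := by
  rintro ⟨f, hfI, -, hf⟩
  have hcoeff := coeff_aeval_of_isLMr_single_one (-1) hf
  have hφ : f ∈ RingHom.ker
      (aeval (![Polynomial.C (-1) * Polynomial.X, Polynomial.X, 0] : Fin 3 → Polynomial K)) := by
    refine Ideal.span_le.mpr ?_ hfI
    rintro g (rfl | rfl) <;> simp [sq]
  rw [(RingHom.mem_ker).mp hφ, Polynomial.coeff_zero] at hcoeff
  exact mem_support_iff.mp hf.1 hcoeff.symm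

/-- **Failure of H2 destroys local constancy of the initial ideal.**
For `f₀ = (X + Y, XY + Y² + Z²)` (a regular sequence which does not generate a
weakly-grevlex ideal), the perturbations `f_t = (X + (1+t)Y, XY + (1-t)Y² + Z²)` with
`t ≠ 0` generate an ideal with a different set of leading monomials (grevlex
`X > Y > Z`); in particular the initial-ideal map is not locally constant at `f₀`. -/
theorem not_locally_constant_H2 {K : Type*} [Field K] [CharZero K]
    (t : K) (ht : t ≠ 0) :
    LMsetr grevlexLe (Ideal.span
        {X 0 + MvPolynomial.C (1 + t) * X 1,
         X 0 * X 1 + MvPolynomial.C (1 - t) * (X 1 : MvPolynomial (Fin 3) K) ^ 2 + X 2 ^ 2}) ≠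
    LMsetr grevlexLe (Ideal.span
        {X 0 + X 1,
         X 0 * X 1 + (X 1 : MvPolynomial (Fin 3) K) ^ 2 + X 2 ^ 2}) := by
  intro hEq
  set g : MvPolynomial (Fin 3) K :=
    monomial (Finsupp.single 1 2) (2 * t) - monomial (Finsupp.single 2 2) 1
  have hg_comb :
      X 1 * (X 0 + C (1 + t) * X 1) + -1 * (X 0 * X 1 + C (1 - t) * X 1 ^ 2 + X 2 ^ 2) = g := by
    simp only [g, ← C_mul_X_pow_eq_monomial, C_add, C_sub, C_mul, C_1, map_ofNat]
    ring
  have hg : IsLMr grevlexLe g (Finsupp.single 1 2) :=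
    isLMr_monomial_sub_monomial (Or.inl rfl) (Or.inr (grevlexLt_single_of_lt (by decide) two_pos))
      (by simp [Finsupp.single_left_inj two_ne_zero]) (mul_ne_zero two_ne_zero ht) 1
  apply single_one_notMem_LMsetr_span (K := K) 2
  rw [← hEq]
  exact ⟨g, Ideal.mem_span_pair.mpr ⟨X 1, -1, hg_comb⟩, fun hg0 => by simp [hg0, IsLMr] at hg, hg⟩
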